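/- arXiv:2203.12090 — 4 statements merged into one kernel-verified Lean document; each statement's English description precedes it below -/
import Mathlib

section
/- The system dφ/dt = γ, dγ/dt = (1/m)(−γ + ω − k sin φ), dk/dt = α cos φ − k has an equilibrium point if and only if α ≥ 2ω. -/
open Real

theorem exists_mul_sin_eq_iff {a c : ℝ} (ha : 0 ≤ a) : (∃ θ, a * sin θ = c) ↔ |c| ≤ a := by
  constructor
  · rintro ⟨θ, rfl⟩
    rw [abs_mul, abs_of_nonneg ha]
    exact mul_le_of_le_one_right ha (abs_sin_le_one θ)
  · intro hc
    rcases ha.eq_or_lt with rfl | ha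
    · exact ⟨0, by simpa [eq_comm] using hc⟩
    · obtain ⟨hlo, hhi⟩ : -1 ≤ c / a ∧ c / a ≤ 1 := by
        rwa [← abs_le, abs_div, abs_of_pos ha, div_le_one ha]
      exact ⟨arcsin (c / a), by rw [sin_arcsin hlo hhi, mul_div_cancel₀ c ha.ne']⟩

/-- At an equilibrium `γ = 0` and `k = α cos φ`, so the remaining condition
`ω = α sin φ cos φ` reads `α sin (2φ) = 2ω`. -/
theorem exists_equilibrium_iff {m α ω : ℝ} (hm : m ≠ 0) :
    (∃ φ γ k : ℝ, γ = 0 ∧ (1 / m) * (-γ + ω - k * sin φ) = 0 ∧ α * cos φ - k = 0) ↔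
      ∃ θ, α * sin θ = 2 * ω := by
  constructor
  · rintro ⟨φ, γ, k, rfl, hω, hk⟩
    have hω' : -0 + ω - k * sin φ = 0 :=
      (mul_eq_zero.mp hω).resolve_left (one_div_ne_zero hm)
    exact ⟨2 * φ, by rw [sin_two_mul]; linear_combination (-2) * hω' + 2 * sin φ * hk⟩
  · rintro ⟨θ, hθ⟩
    have hθ' : sin θ = 2 * sin (θ / 2) * cos (θ / 2) := by
      rw [← sin_two_mul, mul_div_cancel₀ θ two_ne_zero]
    refine ⟨θ / 2, 0, α * cos (θ / 2), rfl, ?_, sub_self _⟩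
    linear_combination (-1 / (2 * m)) * hθ + (α / (2 * m)) * hθ'

theorem equilibrium_exists_iff (m α ω : ℝ) (hm : 0 < m) (hα : 0 < α) (hω : 0 ≤ ω) :
    (∃ φ γ k : ℝ,
      γ = 0 ∧ (1 / m) * (-γ + ω - k * Real.sin φ) = 0 ∧ α * Real.cos φ - k = 0) ↔
    α ≥ 2 * ω := by
  rw [exists_equilibrium_iff hm.ne', exists_mul_sin_eq_iff hα.le,
    abs_of_nonneg (by positivity : (0 : ℝ) ≤ 2 * ω), ge_iff_le]
end

section
/- Let (φ(t), γ(t), k(t)) solve dφ/dt = γ, dγ/dt = (1/m)(−γ + ω − k sin φ), dk/dt = α cos φ − k on [0, ∞). Then for every ε > 0 there exists T ≥ 0 such that |γ(t)| ≤ ω + α + ε for all t ≥ T. -/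
/-!
Both `k` and `γ` obey a relaxation equation `f' = c (g - f)` with `c > 0` and bounded forcing `g`:
`α cos φ` for `k` (rate `1`), `ω - k sin φ` for `γ` (rate `1 / m`). Such an `f` forgets its
initial value exponentially fast, so it is eventually within any `ε` of the bound on `g`.
Applied to `k` this gives `|k| ≤ α + ε/2` eventually, hence `|ω - k sin φ| ≤ ω + α + ε/2`,
and applied once more to `γ` the claim.
-/

open Real Set Filter

theorem le_add_mul_exp_of_relaxation {f g : ℝ → ℝ} {a c A : ℝ} (hc : 0 ≤ c)
    (hf : ∀ t ∈ Ici a, HasDerivAt f (c * (g t - f t)) t) (hg : ∀ t ∈ Ici a, g t ≤ A) :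
    ∀ t ∈ Ici a, f t ≤ A + (f a - A) * exp (-(c * (t - a))) := by
  set u : ℝ → ℝ := fun s => exp (c * s) * (f s - A)
  have hu : ∀ s ∈ Ici a, HasDerivAt u (c * exp (c * s) * (g s - A)) s := fun s hs => by
    have hexp : HasDerivAt (fun s => exp (c * s)) (exp (c * s) * c) s :=
      ((hasDerivAt_id s).const_mul c).exp.congr_deriv (by simp)
    exact (hexp.mul ((hf s hs).sub_const A)).congr_deriv (by ring)
  have hanti : AntitoneOn u (Ici a) := by
    refine antitoneOn_of_hasDerivWithinAt_nonpos (f' := fun s => c * exp (c * s) * (g s - A))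
      (convex_Ici a)
      (fun s hs => (hu s hs).continuousAt.continuousWithinAt) (fun s hs => ?_) (fun s hs => ?_)
    · rw [interior_Ici] at hs
      exact (hu s (Ioi_subset_Ici_self hs)).hasDerivWithinAt
    · rw [interior_Ici] at hs
      have hgA : g s - A ≤ 0 := sub_nonpos.2 (hg s (Ioi_subset_Ici_self hs))
      exact mul_nonpos_of_nonneg_of_nonpos (by positivity) hgA
  intro t ht
  have hut : exp (c * t) * (f t - A) ≤ exp (c * a) * (f a - A) := hanti self_mem_Ici ht ht
  have hsplit : exp (c * a) = exp (c * t) * exp (-(c * (t - a))) := by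
    rw [← exp_add]; ring_nf
  rw [hsplit, mul_assoc] at hut
  linarith [le_of_mul_le_mul_left hut (exp_pos (c * t))]

theorem eventually_le_of_relaxation {f g : ℝ → ℝ} {c A : ℝ} (hc : 0 < c)
    (h : ∀ᶠ t in atTop, HasDerivAt f (c * (g t - f t)) t ∧ g t ≤ A) {ε : ℝ} (hε : 0 < ε) :
    ∀ᶠ t in atTop, f t ≤ A + ε := by
  obtain ⟨a, ha⟩ := eventually_atTop.1 h
  have hbound := le_add_mul_exp_of_relaxation hc.le (fun t ht => (ha t ht).1)
    (fun t ht => (ha t ht).2)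
  have hdecay : Tendsto (fun t => A + (f a - A) * exp (-(c * (t - a)))) atTop (nhds A) := by
    have hlin : Tendsto (fun t => c * (t - a)) atTop atTop :=
      (tendsto_atTop_add_const_right _ _ tendsto_id).const_mul_atTop hc
    simpa using
      ((tendsto_exp_neg_atTop_nhds_zero.comp hlin).const_mul (f a - A)).const_add A
  have hnear := hdecay.eventually (eventually_le_nhds (lt_add_of_pos_right A hε))
  filter_upwards [eventually_ge_atTop a, hnear] with t ht hclose
  exact (hbound t ht).trans hclose

theorem eventually_abs_le_of_relaxation {f g : ℝ → ℝ} {c A : ℝ} (hc : 0 < c)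
    (h : ∀ᶠ t in atTop, HasDerivAt f (c * (g t - f t)) t ∧ |g t| ≤ A) {ε : ℝ} (hε : 0 < ε) :
    ∀ᶠ t in atTop, |f t| ≤ A + ε := by
  have hupper := eventually_le_of_relaxation hc
    (h.mono fun t ht => ⟨ht.1, le_of_abs_le ht.2⟩) hε
  have hlower := eventually_le_of_relaxation (f := -f) (g := -g) hc
    (h.mono fun t ht => ⟨ht.1.neg.congr_deriv (by simp; ring), (neg_le_abs _).trans ht.2⟩) hε
  filter_upwards [hupper, hlower] with t hup hlo
  exact abs_le.2 ⟨by simp only [Pi.neg_apply] at hlo; linarith, hup⟩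

theorem gamma_eventually_bounded_general (m α ω : ℝ) (hm : 0 < m) (hα : 0 < α) (hω : 0 ≤ ω)
    (φ γ k : ℝ → ℝ)
    (hγ : ∀ t ∈ Set.Ici (0 : ℝ),
      HasDerivAt γ ((1 / m) * (-(γ t) + ω - k t * Real.sin (φ t))) t)
    (hk : ∀ t ∈ Set.Ici (0 : ℝ), HasDerivAt k (α * Real.cos (φ t) - k t) t) :
    ∀ ε : ℝ, 0 < ε → ∃ T : ℝ, 0 ≤ T ∧ ∀ t : ℝ, T ≤ t → |γ t| ≤ ω + α + ε := by
  intro ε hε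
  have hk_bound : ∀ᶠ t in atTop, |k t| ≤ α + ε / 2 := by
    refine eventually_abs_le_of_relaxation (g := fun t => α * cos (φ t)) one_pos ?_
      (half_pos hε)
    filter_upwards [eventually_ge_atTop 0] with t ht
    refine ⟨(hk t ht).congr_deriv (one_mul _).symm, ?_⟩
    rw [abs_mul, abs_of_pos hα]
    exact mul_le_of_le_one_right hα.le (abs_cos_le_one _)
  have hγ_bound : ∀ᶠ t in atTop, |γ t| ≤ ω + α + ε / 2 + ε / 2 := by
    refine eventually_abs_le_of_relaxation (g := fun t => ω - k t * sin (φ t))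
      (one_div_pos.2 hm) ?_ (half_pos hε)
    filter_upwards [eventually_ge_atTop 0, hk_bound] with t ht hkt
    refine ⟨(hγ t ht).congr_deriv (by ring), ?_⟩
    have hforce : |k t * sin (φ t)| ≤ α + ε / 2 := by
      rw [abs_mul]
      exact (mul_le_of_le_one_right (abs_nonneg _) (abs_sin_le_one _)).trans hkt
    calc |ω - k t * sin (φ t)| ≤ |ω| + |k t * sin (φ t)| := abs_sub _ _
      _ ≤ ω + α + ε / 2 := by rw [abs_of_nonneg hω]; linarith
  obtain ⟨T, hT⟩ := eventually_atTop.1 hγ_bound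
  exact ⟨max T 0, le_max_right _ _, fun t ht => by
    linarith [hT t ((le_max_left _ _).trans ht)]⟩

theorem gamma_eventually_bounded (m α ω : ℝ) (hm : 0 < m) (hα : 0 < α) (hω : 0 ≤ ω)
    (φ γ k : ℝ → ℝ)
    (hφ : ∀ t ∈ Set.Ici (0 : ℝ), HasDerivAt φ (γ t) t)
    (hγ : ∀ t ∈ Set.Ici (0 : ℝ),
      HasDerivAt γ ((1 / m) * (-(γ t) + ω - k t * Real.sin (φ t))) t)
    (hk : ∀ t ∈ Set.Ici (0 : ℝ), HasDerivAt k (α * Real.cos (φ t) - k t) t) :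
    ∀ ε : ℝ, 0 < ε → ∃ T : ℝ, 0 ≤ T ∧ ∀ t : ℝ, T ≤ t → |γ t| ≤ ω + α + ε :=
  gamma_eventually_bounded_general m α ω hm hα hω φ γ k hγ hk
end

section
/- Along any solution of the system dφ/dt = γ, dγ/dt = (1/m)(−γ + ω − k sin φ), dk/dt = α cos φ − k, the function E(φ, γ, k) = (α m γ²)/2 − α ω φ − α k cos φ + k²/2 satisfies dE/dt = −(α γ² + (k − α cos φ)²) ≤ 0. -/
open Real

noncomputable def energy (m α ω φ γ k : ℝ) : ℝ :=
  α * m * γ ^ 2 / 2 - α * ω * φ - α * k * cos φ + k ^ 2 / 2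

theorem hasDerivAt_energy (m α ω : ℝ) {φ γ k : ℝ → ℝ} {φ' γ' k' t : ℝ}
    (hφ : HasDerivAt φ φ' t) (hγ : HasDerivAt γ γ' t) (hk : HasDerivAt k k' t) :
    HasDerivAt (fun s => energy m α ω (φ s) (γ s) (k s))
      (α * m * γ t * γ' - α * ω * φ' - α * k' * cos (φ t) + α * k t * sin (φ t) * φ'
        + k t * k') t := by
  have hcos : HasDerivAt (fun s => cos (φ s)) (-sin (φ t) * φ') t :=
    (hasDerivAt_cos (φ t)).comp t hφ
  have hγ2 := (hγ.pow 2).const_mul (α * m) |>.div_const 2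
  have hk2 := (hk.pow 2).div_const 2
  refine (((hγ2.sub (hφ.const_mul (α * ω))).sub ((hk.const_mul α).mul hcos)).add hk2).congr_deriv ?_
  norm_num
  ring

/-- The forcing terms `α ω γ` and `α k γ sin φ` cancel; what remains is the dissipation. -/
theorem energy_derivative_along_flow {m : ℝ} (hm : m ≠ 0) (α ω φ γ k : ℝ) :
    α * m * γ * ((1 / m) * (-γ + ω - k * sin φ)) - α * ω * γ - α * (α * cos φ - k) * cos φ
        + α * k * sin φ * γ + k * (α * cos φ - k)
      = -(α * γ ^ 2 + (k - α * cos φ) ^ 2) := by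
  field_simp
  ring

theorem energy_nonincreasing (m α ω : ℝ) (hm : 0 < m) (hα : 0 < α)
    (φ γ k : ℝ → ℝ)
    (hφ : ∀ t, HasDerivAt φ (γ t) t)
    (hγ : ∀ t, HasDerivAt γ ((1 / m) * (-(γ t) + ω - k t * Real.sin (φ t))) t)
    (hk : ∀ t, HasDerivAt k (α * Real.cos (φ t) - k t) t) :
    ∀ t : ℝ,
      HasDerivAt (fun s => (α * m * (γ s) ^ 2) / 2 - α * ω * φ s
          - α * k s * Real.cos (φ s) + (k s) ^ 2 / 2)
        (-(α * (γ t) ^ 2 + (k t - α * Real.cos (φ t)) ^ 2)) t ∧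
      -(α * (γ t) ^ 2 + (k t - α * Real.cos (φ t)) ^ 2) ≤ 0 := by
  intro t
  refine ⟨?_, neg_nonpos.mpr (by positivity)⟩
  rw [← energy_derivative_along_flow hm.ne']
  exact hasDerivAt_energy m α ω (hφ t) (hγ t) (hk t)
end

section
/- Let m > 0 and u ≥ v ≥ 0 with u > v, and let f(x) = 2mx³ + 2(m+1)x² + (u+2)x + (u − v). Then every complex root of f has negative real part. -/
/-!
Routh–Hurwitz for cubics: a real cubic `a z³ + b z² + c z + d` with positive coefficients and
`a d < b c` has all its roots in the open left half-plane. A real root `s ≥ 0` is impossible since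
every term is positive. For a root `s + t i` with `t ≠ 0`, the imaginary part gives
`a t² = 3 a s² + 2 b s + c`; substituting this into `a` times the real part leaves
`8 a² s³ + 8 a b s² + 2 (a c + b²) s + (b c - a d) = 0`, impossible for `s ≥ 0`.
Here `b c - a d = 2 (m + 1) (u + 2) - 2 m (u - v) > 0`.
-/

namespace Complex

variable (a b c d : ℝ) (z : ℂ)

lemma re_cubic :
    ((a : ℂ) * z ^ 3 + b * z ^ 2 + c * z + d).re =
      a * (z.re ^ 3 - 3 * z.re * z.im ^ 2) + b * (z.re ^ 2 - z.im ^ 2) + c * z.re + d := by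
  simp only [add_re, mul_re, ofReal_re, ofReal_im, pow_succ, pow_zero, one_mul, mul_im]
  ring

lemma im_cubic :
    ((a : ℂ) * z ^ 3 + b * z ^ 2 + c * z + d).im =
      z.im * (a * (3 * z.re ^ 2 - z.im ^ 2) + 2 * b * z.re + c) := by
  simp only [add_im, mul_re, mul_im, ofReal_re, ofReal_im, pow_succ, pow_zero, one_mul]
  ring

variable {a b c d z}

theorem re_neg_of_cubic_eq_zero (ha : 0 < a) (hb : 0 < b) (hc : 0 < c) (hd : 0 < d)
    (hadbc : a * d < b * c) (hz : (a : ℂ) * z ^ 3 + b * z ^ 2 + c * z + d = 0) : z.re < 0 := by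
  have hre := re_cubic a b c d z
  have him := im_cubic a b c d z
  rw [hz, zero_re] at hre
  rw [hz, zero_im] at him
  set s := z.re
  set t := z.im
  by_contra! hs
  rcases mul_eq_zero.mp him.symm with ht | himag
  · rw [ht] at hre
    nlinarith [pow_nonneg hs 2, pow_nonneg hs 3]
  · have hreduced : 8 * a ^ 2 * s ^ 3 + 8 * a * b * s ^ 2 + 2 * (a * c + b ^ 2) * s
        + (b * c - a * d) = 0 := by
      linear_combination a * hre + (3 * a * s + b) * himag
    nlinarith [pow_nonneg hs 2, pow_nonneg hs 3, mul_pos ha ha, mul_pos ha hb, mul_pos ha hc,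
      mul_pos hb hb]

end Complex

theorem f_roots_negative_real_part (m u v : ℝ) (hm : 0 < m) (hv : 0 ≤ v) (huv : v < u) :
    ∀ z : ℂ,
      2 * (m : ℂ) * z ^ 3 + 2 * ((m : ℂ) + 1) * z ^ 2 + ((u : ℂ) + 2) * z + ((u : ℂ) - v) = 0 →
      z.re < 0 := by
  intro z hz
  have hz' : ((2 * m : ℝ) : ℂ) * z ^ 3 + ((2 * (m + 1) : ℝ) : ℂ) * z ^ 2 + ((u + 2 : ℝ) : ℂ) * z
      + ((u - v : ℝ) : ℂ) = 0 := by
    push_cast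
    exact hz
  exact Complex.re_neg_of_cubic_eq_zero (by positivity) (by positivity) (by linarith) (by linarith)
    (by nlinarith) hz'
end
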